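/- arXiv:1603.09511 — 2 statements merged into one kernel-verified Lean document; each statement's English description precedes it below -/
import Mathlib

section
/- Let M be a nonempty finite set of interpretations closed under intersection, union, and betweenness (the 1CNF closure conditions). Then for any interpretations ω₁, ω₂: H(ω₁, M) + H(ω₂, M) = H(ω₁ ∩ ω₂, M) + H(ω₁ ∪ ω₂, M), where H(ω, M) is the minimum Hamming distance from ω to an element of M. -/
def hamming {U : Type*} [DecidableEq U] (s t : Finset U) : ℕ := (s \ t ∪ t \ s).card

noncomputable def distToSet {U : Type*} [DecidableEq U] (ω : Finset U) (M : Set (Finset U)) : ℕ :=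
  sInf {n : ℕ | ∃ τ ∈ M, n = hamming ω τ}

lemma hamming_eq_sum {U : Type*} [DecidableEq U] [Fintype U] (s t : Finset U) :
    hamming s t = ∑ u, if ¬((u ∈ s) ↔ (u ∈ t)) then 1 else 0 := by
  classical
  have h : (s \ t ∪ t \ s) = Finset.univ.filter fun u => ¬ ((u ∈ s) ↔ (u ∈ t)) := by
    ext u; simp; tauto
  rw [hamming, h, Finset.card_filter]

lemma ham_submod {U : Type*} [DecidableEq U] [Fintype U] (a b x y : Finset U) :
    hamming (a ∩ b) (x ∩ y) + hamming (a ∪ b) (x ∪ y) ≤ hamming a x + hamming b y := by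
  classical
  simp only [hamming_eq_sum, ← Finset.sum_add_distrib]
  apply Finset.sum_le_sum
  intro u _
  by_cases h1 : u ∈ a <;> by_cases h2 : u ∈ b <;> by_cases h3 : u ∈ x <;> by_cases h4 : u ∈ y <;>
    simp [h1, h2, h3, h4]

lemma ham_median {U : Type*} [DecidableEq U] [Fintype U] (ω₁ ω₂ σ ρ : Finset U) :
    hamming ω₁ ((σ ∩ ω₁) ∪ (ω₁ ∩ ρ) ∪ (σ ∩ ρ)) + hamming ω₂ ((σ ∩ ω₂) ∪ (ω₂ ∩ ρ) ∪ (σ ∩ ρ))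
      ≤ hamming (ω₁ ∩ ω₂) σ + hamming (ω₁ ∪ ω₂) ρ := by
  classical
  simp only [hamming_eq_sum, ← Finset.sum_add_distrib]
  apply Finset.sum_le_sum
  intro u _
  by_cases h1 : u ∈ ω₁ <;> by_cases h2 : u ∈ ω₂ <;> by_cases h3 : u ∈ σ <;> by_cases h4 : u ∈ ρ <;>
    simp [h1, h2, h3, h4]

theorem stmt_4 {U : Type*} [DecidableEq U] [Fintype U]
    (M : Set (Finset U)) (hMfin : M.Finite) (hMne : M.Nonempty)
    (hcap : ∀ x ∈ M, ∀ y ∈ M, x ∩ y ∈ M)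
    (hcup : ∀ x ∈ M, ∀ y ∈ M, x ∪ y ∈ M)
    (hbetween : ∀ x ∈ M, ∀ y ∈ M, ∀ z : Finset U, x ⊆ z → z ⊆ y → z ∈ M)
    (ω₁ ω₂ : Finset U) :
    distToSet ω₁ M + distToSet ω₂ M =
      distToSet (ω₁ ∩ ω₂) M + distToSet (ω₁ ∪ ω₂) M := by
  classical
  -- attainment and upper bound for distToSet
  have hne : ∀ ω : Finset U, {n : ℕ | ∃ τ ∈ M, n = hamming ω τ}.Nonempty := by
    intro ω
    obtain ⟨τ, hτ⟩ := hMne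
    exact ⟨hamming ω τ, τ, hτ, rfl⟩
  have hmem : ∀ ω : Finset U, ∃ τ ∈ M, distToSet ω M = hamming ω τ := by
    intro ω
    exact Nat.sInf_mem (hne ω)
  have hle : ∀ (ω τ : Finset U), τ ∈ M → distToSet ω M ≤ hamming ω τ := by
    intro ω τ hτ
    exact Nat.sInf_le ⟨τ, hτ, rfl⟩
  obtain ⟨τ₁, hτ₁M, hτ₁⟩ := hmem ω₁
  obtain ⟨τ₂, hτ₂M, hτ₂⟩ := hmem ω₂
  obtain ⟨σ, hσM, hσ⟩ := hmem (ω₁ ∩ ω₂)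
  obtain ⟨ρ, hρM, hρ⟩ := hmem (ω₁ ∪ ω₂)
  -- ≥ direction
  have h1 : distToSet (ω₁ ∩ ω₂) M + distToSet (ω₁ ∪ ω₂) M ≤
      distToSet ω₁ M + distToSet ω₂ M := by
    calc distToSet (ω₁ ∩ ω₂) M + distToSet (ω₁ ∪ ω₂) M
        ≤ hamming (ω₁ ∩ ω₂) (τ₁ ∩ τ₂) + hamming (ω₁ ∪ ω₂) (τ₁ ∪ τ₂) :=
          Nat.add_le_add (hle _ _ (hcap _ hτ₁M _ hτ₂M)) (hle _ _ (hcup _ hτ₁M _ hτ₂M))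
      _ ≤ hamming ω₁ τ₁ + hamming ω₂ τ₂ := ham_submod ω₁ ω₂ τ₁ τ₂
      _ = distToSet ω₁ M + distToSet ω₂ M := by rw [hτ₁, hτ₂]
  -- ≤ direction: use medians
  have hmedM : ∀ ω : Finset U, ((σ ∩ ω) ∪ (ω ∩ ρ) ∪ (σ ∩ ρ)) ∈ M := by
    intro ω
    apply hbetween _ (hcap _ hσM _ hρM) _ (hcup _ hσM _ hρM)
    · exact Finset.subset_union_right
    · intro u hu
      simp only [Finset.mem_union, Finset.mem_inter] at hu ⊢
      tauto
  have h2 : distToSet ω₁ M + distToSet ω₂ M ≤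
      distToSet (ω₁ ∩ ω₂) M + distToSet (ω₁ ∪ ω₂) M := by
    calc distToSet ω₁ M + distToSet ω₂ M
        ≤ hamming ω₁ ((σ ∩ ω₁) ∪ (ω₁ ∩ ρ) ∪ (σ ∩ ρ)) +
            hamming ω₂ ((σ ∩ ω₂) ∪ (ω₂ ∩ ρ) ∪ (σ ∩ ρ)) :=
          Nat.add_le_add (hle _ _ (hmedM ω₁)) (hle _ _ (hmedM ω₂))
      _ ≤ hamming (ω₁ ∩ ω₂) σ + hamming (ω₁ ∪ ω₂) ρ := ham_median ω₁ ω₂ σ ρ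
      _ = distToSet (ω₁ ∩ ω₂) M + distToSet (ω₁ ∪ ω₂) M := by rw [hσ, hρ]
  omega
end

section
/- With ωᵢ' = ωᵢ ∪ (A \ {aᵢ}) as above (A a set of n fresh atoms, one per model ωᵢ of K), the Hamming distance from ωᵢ to ωᵢ' is n − 1, while for every interpretation ω over the original alphabet U with ω ∉ {ω₁,...,ωₙ}, the Hamming distance from ω to any element of the Krom closure of {ω₁',...,ωₙ'} is at least n. -/
def maj3 {U : Type*} [DecidableEq U] (x y z : Finset U) : Finset U :=
  (x ∩ y) ∪ (x ∩ z) ∪ (y ∩ z)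

def kromClosedSet {U : Type*} [DecidableEq U] (S : Set (Finset U)) : Prop :=
  ∀ x ∈ S, ∀ y ∈ S, ∀ z ∈ S, maj3 x y z ∈ S

def kromCl {U : Type*} [DecidableEq U] (M : Set (Finset U)) : Set (Finset U) :=
  ⋂₀ {S : Set (Finset U) | M ⊆ S ∧ kromClosedSet S}

lemma maj3_xyy {U : Type*} [DecidableEq U] (x y : Finset U) : maj3 x y y = y := by
  ext w; simp [maj3]

lemma maj3_xyx {U : Type*} [DecidableEq U] (x y : Finset U) : maj3 x y x = x := by
  ext w; simp [maj3]; tauto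

lemma maj3_xxz {U : Type*} [DecidableEq U] (x z : Finset U) : maj3 x x z = x := by
  ext w; simp [maj3]; tauto

theorem stmt_12 {W : Type*} [DecidableEq W] {n : ℕ}
    (a : Fin n → W) (ha : Function.Injective a)
    (A : Finset W) (hA : A = Finset.image a Finset.univ)
    (ω : Fin n → Finset W) (hω : Function.Injective ω)
    (hdisj : ∀ i, Disjoint (ω i) A)
    (ω' : Fin n → Finset W) (hω' : ∀ i, ω' i = ω i ∪ A.erase (a i)) :
    (∀ i, hamming (ω i) (ω' i) = n - 1) ∧
    (∀ σ : Finset W, Disjoint σ A → σ ∉ Set.range ω →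
        ∀ τ ∈ kromCl (Set.range ω'), n ≤ hamming σ τ) := by
  have haA : ∀ i, a i ∈ A := by
    intro i; rw [hA]; exact Finset.mem_image_of_mem a (Finset.mem_univ i)
  have hcardA : A.card = n := by
    rw [hA, Finset.card_image_of_injective _ ha, Finset.card_univ, Fintype.card_fin]
  have hnotω : ∀ i m, a m ∉ ω i := fun i m h =>
    Finset.disjoint_left.mp (hdisj i) h (haA m)
  have hmem' : ∀ i m, a m ∈ ω' i ↔ m ≠ i := by
    intro i m
    rw [hω' i]
    simp only [Finset.mem_union, Finset.mem_erase]
    constructor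
    · rintro (h | ⟨hne, _⟩)
      · exact absurd h (hnotω i m)
      · intro e; exact hne (by rw [e])
    · intro h; exact Or.inr ⟨fun e => h (ha e), haA m⟩
  constructor
  · intro i
    have h1 : ω i \ ω' i = ∅ := by
      rw [Finset.sdiff_eq_empty_iff_subset, hω']
      exact Finset.subset_union_left
    have h2 : ω' i \ ω i = A.erase (a i) := by
      rw [hω']
      ext w
      simp only [Finset.mem_sdiff, Finset.mem_union, Finset.mem_erase]
      constructor
      · rintro ⟨h | h, hn⟩
        · exact absurd h hn
        · exact h
      · rintro ⟨hne, hw⟩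
        exact ⟨Or.inr ⟨hne, hw⟩, fun hc => Finset.disjoint_left.mp (hdisj i) hc hw⟩
    rw [hamming, h1, h2, Finset.empty_union, Finset.card_erase_of_mem (haA i), hcardA]
  · intro σ hσ hσr τ hτ
    set S : Set (Finset W) := Set.range ω' ∪ {t | A ⊆ t} with hS
    have hSclosed : kromClosedSet S := by
      intro x hx y hy z hz
      by_cases hAsub : A ⊆ maj3 x y z
      · exact Or.inr hAsub
      · obtain ⟨w, hwA, hwm⟩ := Finset.not_subset.mp hAsub
        obtain ⟨m, rfl⟩ : ∃ m, a m = w := by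
          rw [hA] at hwA; simpa using hwA
        have key : ∀ s, s ∈ S → a m ∉ s → s = ω' m := by
          rintro s hs hns
          rcases hs with ⟨i, rfl⟩ | h
          · have : ¬ m ≠ i := fun hne => hns ((hmem' i m).mpr hne)
            rw [not_not.mp this]
          · exact absurd (h hwA) hns
        simp only [maj3, Finset.mem_union, Finset.mem_inter, not_or] at hwm
        obtain ⟨⟨hxy, hxz⟩, hyz⟩ := hwm
        by_cases hx1 : a m ∈ x
        · have hy1 : a m ∉ y := fun h => hxy ⟨hx1, h⟩
          have hz1 : a m ∉ z := fun h => hxz ⟨hx1, h⟩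
          rw [key y hy hy1, key z hz hz1, maj3_xyy]
          exact Or.inl ⟨m, rfl⟩
        · by_cases hy1 : a m ∈ y
          · have hz1 : a m ∉ z := fun h => hyz ⟨hy1, h⟩
            rw [key x hx hx1, key z hz hz1, maj3_xyx]
            exact Or.inl ⟨m, rfl⟩
          · rw [key x hx hx1, key y hy hy1, maj3_xxz]
            exact Or.inl ⟨m, rfl⟩
    have hτS : τ ∈ S := hτ S ⟨Set.subset_union_left, hSclosed⟩
    rcases hτS with ⟨i, rfl⟩ | hAτ
    · -- τ = ω' i
      have hne : σ ≠ ω i := fun e => hσr ⟨i, e.symm⟩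
      have : ∃ w, (w ∈ σ ∧ w ∉ ω i) ∨ (w ∈ ω i ∧ w ∉ σ) := by
        by_contra hc
        push_neg at hc
        apply hne
        ext w
        exact ⟨fun h => (hc w).1 h, fun h => (hc w).2 h⟩
      obtain ⟨w, hw⟩ := this
      have hwA : w ∉ A := by
        rcases hw with ⟨h1, _⟩ | ⟨h1, _⟩
        · exact fun hc => Finset.disjoint_left.mp hσ h1 hc
        · exact fun hc => Finset.disjoint_left.mp (hdisj i) h1 hc
      have hsub : insert w (A.erase (a i)) ⊆ σ \ ω' i ∪ ω' i \ σ := by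
        intro x hx
        rcases Finset.mem_insert.mp hx with rfl | hx
        · rcases hw with ⟨h1, h2⟩ | ⟨h1, h2⟩
          · refine Finset.mem_union_left _ (Finset.mem_sdiff.mpr ⟨h1, ?_⟩)
            rw [hω']
            simp only [Finset.mem_union, not_or]
            exact ⟨h2, fun hc => hwA (Finset.mem_of_mem_erase hc)⟩
          · refine Finset.mem_union_right _ (Finset.mem_sdiff.mpr ⟨?_, h2⟩)
            rw [hω']; exact Finset.mem_union_left _ h1
        · have hxA : x ∈ A := Finset.mem_of_mem_erase hx
          refine Finset.mem_union_right _ (Finset.mem_sdiff.mpr ⟨?_, ?_⟩)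
          · rw [hω']; exact Finset.mem_union_right _ hx
          · exact fun hc => Finset.disjoint_left.mp hσ hc hxA
      have hcard : (insert w (A.erase (a i))).card = n := by
        rw [Finset.card_insert_of_notMem (fun hc => hwA (Finset.mem_of_mem_erase hc)),
          Finset.card_erase_of_mem (haA i), hcardA]
        have : 1 ≤ n := i.pos
        omega
      calc n = (insert w (A.erase (a i))).card := hcard.symm
        _ ≤ (σ \ ω' i ∪ ω' i \ σ).card := Finset.card_le_card hsub
        _ = hamming σ (ω' i) := rfl
    · -- A ⊆ τ
      have hsub : A ⊆ σ \ τ ∪ τ \ σ := by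
        intro x hx
        refine Finset.mem_union_right _ (Finset.mem_sdiff.mpr ⟨hAτ hx, ?_⟩)
        exact fun hc => Finset.disjoint_left.mp hσ hc hx
      calc n = A.card := hcardA.symm
        _ ≤ (σ \ τ ∪ τ \ σ).card := Finset.card_le_card hsub
        _ = hamming σ τ := rfl
end
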